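/- arXiv:2508.10766 — 2 statements merged into one kernel-verified Lean document; each statement's English description precedes it below -/
import Mathlib

section
/- Define f : ℝ² → ℝ² by f(x₁, x₂) = ((x₁² − x₂²)/(x₁² + x₂²), 2x₁x₂/(x₁² + x₂²)) for (x₁, x₂) ≠ (0,0), and f(0,0) = (0,0). Then for every z̄ ≠ (0,0), the covering constant of f at (z̄, f(z̄)) equals 0; that is, sup_{η>0} inf { ‖(∇f(z))* y‖ : z ∈ ℝ² \ {0}, ‖z − z̄‖ ≤ η, ‖f(z) − f(z̄)‖ ≤ η, ‖y‖ = 1 } = 0. -/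
open Classical in
/-- The rational mapping 4.1:
`f(x₁,x₂) = ((x₁² − x₂²)/(x₁² + x₂²), 2x₁x₂/(x₁² + x₂²))` for `x ≠ 0`, `f(0) = 0`. -/
noncomputable def ratMap (x : EuclideanSpace ℝ (Fin 2)) : EuclideanSpace ℝ (Fin 2) :=
  if x = 0 then 0 else
    WithLp.toLp 2 ![(x 0 ^ 2 - x 1 ^ 2) / (x 0 ^ 2 + x 1 ^ 2), 2 * x 0 * x 1 / (x 0 ^ 2 + x 1 ^ 2)]

/-- The covering constant `α̂(f, z̄, f(z̄))` of a map `f : ℝ² → ℝ²` (Fréchet differentiable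
on the set `S`) at `z̄`:
`sup_{η>0} inf { ‖(∇f(z))* y‖ : z ∈ S, ‖z − z̄‖ ≤ η, ‖f(z) − f(z̄)‖ ≤ η, ‖y‖ = 1 }`. -/
noncomputable def coveringConstant (f : EuclideanSpace ℝ (Fin 2) → EuclideanSpace ℝ (Fin 2))
    (S : Set (EuclideanSpace ℝ (Fin 2))) (zb : EuclideanSpace ℝ (Fin 2)) : ℝ :=
  sSup { a : ℝ | ∃ η : ℝ, 0 < η ∧
    a = sInf { r : ℝ | ∃ z ∈ S, ∃ y : EuclideanSpace ℝ (Fin 2),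
      ‖z - zb‖ ≤ η ∧ ‖f z - f zb‖ ≤ η ∧ ‖y‖ = 1 ∧
      r = ‖ContinuousLinearMap.adjoint (fderiv ℝ f z) y‖ } }

/-!
Since `‖ratMap z‖ = 1` on a neighbourhood of `z̄ ≠ 0`, differentiating `‖ratMap z‖²` shows that the
range of `∇ ratMap(z̄)` is orthogonal to `ratMap z̄`, i.e. the adjoint kills the unit vector
`y = ratMap z̄`. Taking `z = z̄` and this `y` makes every infimum in the covering constant `0`.
-/

open Filter Topology RealInnerProductSpace

section NormLocallyConstant

variable {E F : Type*} [NormedAddCommGroup E] [NormedAddCommGroup F] [InnerProductSpace ℝ F]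
  {f : E → F} {x : E} {r : ℝ}

variable [NormedSpace ℝ E] in
theorem inner_fderiv_apply_eq_zero_of_eventually_norm_eq (h : ∀ᶠ y in 𝓝 x, ‖f y‖ = r) (v : E) :
    ⟪f x, fderiv ℝ f x v⟫ = 0 := by
  by_cases hf : DifferentiableAt ℝ f x
  · have hconst : (‖f ·‖ ^ 2) =ᶠ[𝓝 x] fun _ => r ^ 2 := h.mono fun y hy => by simp [hy]
    have hderiv :=
      hf.hasFDerivAt.norm_sq.unique ((hasFDerivAt_const (r ^ 2) x).congr_of_eventuallyEq hconst)
    simpa using congr($hderiv v)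
  · simp [fderiv_zero_of_not_differentiableAt hf]

variable [InnerProductSpace ℝ E] [CompleteSpace E] [CompleteSpace F]

theorem adjoint_fderiv_apply_self_eq_zero_of_eventually_norm_eq (h : ∀ᶠ y in 𝓝 x, ‖f y‖ = r) :
    (fderiv ℝ f x).adjoint (f x) = 0 := by
  rw [← inner_self_eq_zero (𝕜 := ℝ), ContinuousLinearMap.adjoint_inner_left]
  exact inner_fderiv_apply_eq_zero_of_eventually_norm_eq h _

end NormLocallyConstant

theorem sSup_sInf_eq_of_forall_isLeast {T : ℝ → Set ℝ} {c : ℝ} (h : ∀ η, 0 < η → IsLeast (T η) c) :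
    sSup {a | ∃ η, 0 < η ∧ a = sInf (T η)} = c := by
  have hset : {a | ∃ η, 0 < η ∧ a = sInf (T η)} = {c} := by
    ext a
    constructor
    · rintro ⟨η, hη, rfl⟩
      exact (h η hη).csInf_eq
    · rintro rfl
      exact ⟨1, one_pos, (h 1 one_pos).csInf_eq.symm⟩
  rw [hset, csSup_singleton]

theorem coveringConstant_eq_zero_of_adjoint_fderiv_apply_eq_zero
    {f : EuclideanSpace ℝ (Fin 2) → EuclideanSpace ℝ (Fin 2)} {S : Set (EuclideanSpace ℝ (Fin 2))}
    {zb y : EuclideanSpace ℝ (Fin 2)} (hzb : zb ∈ S) (hy : ‖y‖ = 1)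
    (h : (fderiv ℝ f zb).adjoint y = 0) : coveringConstant f S zb = 0 := by
  refine sSup_sInf_eq_of_forall_isLeast fun η hη => ⟨?_, ?_⟩
  · exact ⟨zb, hzb, y, by simp [hη.le], by simp [hη.le], hy, by simp [h]⟩
  · rintro r ⟨z, -, y, -, -, -, rfl⟩
    positivity

theorem ratMap_norm_eq_one {x : EuclideanSpace ℝ (Fin 2)} (hx : x ≠ 0) : ‖ratMap x‖ = 1 := by
  have hpos : 0 < x 0 ^ 2 + x 1 ^ 2 := by
    simpa [EuclideanSpace.norm_sq_eq, Fin.sum_univ_two] using pow_pos (norm_pos_iff.mpr hx) 2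
  rw [EuclideanSpace.norm_eq, Real.sqrt_eq_one, Fin.sum_univ_two]
  simp only [ratMap, if_neg hx, PiLp.toLp_apply, Matrix.cons_val_zero, Matrix.cons_val_one,
    Real.norm_eq_abs, sq_abs]
  field_simp
  ring

/-- the covering constant of `ratMap` (with `S = ℝ² \ {0}`) at every
`z̄ ≠ 0` equals `0`. -/
theorem ratMap_coveringConstant_eq_zero (zb : EuclideanSpace ℝ (Fin 2)) (hzb : zb ≠ 0) :
    coveringConstant ratMap {(0 : EuclideanSpace ℝ (Fin 2))}ᶜ zb = 0 := by
  have hnorm : ∀ᶠ z in 𝓝 zb, ‖ratMap z‖ = 1 :=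
    (eventually_ne_nhds hzb).mono fun z hz => ratMap_norm_eq_one hz
  exact coveringConstant_eq_zero_of_adjoint_fderiv_apply_eq_zero hzb (ratMap_norm_eq_one hzb)
    (adjoint_fderiv_apply_self_eq_zero_of_eventually_norm_eq hnorm)
end

section
/- Define f : ℝ² → ℝ² by f(x₁, x₂) = ((x₁² − x₂²)/(x₁² + x₂²), 2x₁x₂/(x₁² + x₂²)) for (x₁, x₂) ≠ (0,0), and f(0,0) = (0,0). Then for every y = (y₁, y₂) ≠ (0,0) and every x ∈ ℝ², one has limsup_{u → 0, u ≠ 0} (⟨x, u⟩ − ⟨y, f(u)⟩)/(‖u‖ + ‖f(u)‖) > 0. Consequently, the Mordukhovich coderivative set of f at the origin applied to y is empty for every y ≠ (0,0). -/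
open scoped RealInnerProductSpace

/-!
Identifying `ℝ²` with `ℂ`, `ratMap z = z² / |z|²`: it is constant on rays through the origin and
maps onto the unit circle. Pick `w` with `ratMap w = -y / ‖y‖`. Along the ray `t • w` the
coderivative quotient equals `(t ⟪x, w⟫ + ‖y‖) / (|t| ‖w‖ + 1)`, which tends to `‖y‖ > 0` as
`t → 0`, so the limsup is at least `‖y‖` whatever `x` is.
-/

open Filter Topology

lemma inner_sub_inner_div_norm_add_norm_le {E F : Type*} [NormedAddCommGroup E]
    [InnerProductSpace ℝ E] [NormedAddCommGroup F] [InnerProductSpace ℝ F] (x u : E) (y v : F) :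
    (⟪x, u⟫ - ⟪y, v⟫) / (‖u‖ + ‖v‖) ≤ ‖x‖ + ‖y‖ := by
  refine div_le_of_le_mul₀ (by positivity) (by positivity) ?_
  have hxu := real_inner_le_norm x u
  have hyv := neg_le_of_abs_le (abs_real_inner_le_norm y v)
  nlinarith [mul_nonneg (norm_nonneg x) (norm_nonneg v), mul_nonneg (norm_nonneg y) (norm_nonneg u)]

lemma le_limsup_of_tendsto_comp {α β : Type*} {l : Filter α} [l.NeBot] {l' : Filter β}
    {f : β → ℝ} {γ : α → β} {a : ℝ} (hγ : Tendsto γ l l') (hfγ : Tendsto (f ∘ γ) l (𝓝 a))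
    (hf : IsBoundedUnder (· ≤ ·) l' f) : a ≤ limsup f l' :=
  hfγ.limsup_eq ▸ hγ.limsup_comp_le_limsup hfγ.isBoundedUnder_ge.isCoboundedUnder_le hf

namespace EuclideanSpace

lemma real_norm_sq_fin_two (u : EuclideanSpace ℝ (Fin 2)) : ‖u‖ ^ 2 = u 0 ^ 2 + u 1 ^ 2 := by
  rw [real_norm_sq_eq, Fin.sum_univ_two]

lemma sq_add_sq_ne_zero_of_ne_zero {u : EuclideanSpace ℝ (Fin 2)} (hu : u ≠ 0) :
    u 0 ^ 2 + u 1 ^ 2 ≠ 0 := by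
  rw [← real_norm_sq_fin_two]
  exact pow_ne_zero 2 (norm_ne_zero_iff.2 hu)

end EuclideanSpace

open EuclideanSpace

lemma ratMap_apply_zero_of_ne_zero {u : EuclideanSpace ℝ (Fin 2)} (hu : u ≠ 0) :
    ratMap u 0 = (u 0 ^ 2 - u 1 ^ 2) / (u 0 ^ 2 + u 1 ^ 2) := by
  simp [ratMap, hu]

lemma ratMap_apply_one_of_ne_zero {u : EuclideanSpace ℝ (Fin 2)} (hu : u ≠ 0) :
    ratMap u 1 = 2 * u 0 * u 1 / (u 0 ^ 2 + u 1 ^ 2) := by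
  simp [ratMap, hu]

lemma ratMap_smul {t : ℝ} (ht : t ≠ 0) (u : EuclideanSpace ℝ (Fin 2)) :
    ratMap (t • u) = ratMap u := by
  rcases eq_or_ne u 0 with rfl | hu
  · rw [smul_zero]
  have htu : t • u ≠ 0 := smul_ne_zero ht hu
  have hden := sq_add_sq_ne_zero_of_ne_zero hu
  ext i
  fin_cases i
  · simp only [Fin.zero_eta, ratMap_apply_zero_of_ne_zero htu, ratMap_apply_zero_of_ne_zero hu,
      PiLp.smul_apply, smul_eq_mul]
    field_simp
  · simp only [Fin.mk_one, ratMap_apply_one_of_ne_zero htu, ratMap_apply_one_of_ne_zero hu,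
      PiLp.smul_apply, smul_eq_mul]
    field_simp

lemma exists_ratMap_eq {c : EuclideanSpace ℝ (Fin 2)} (hc : ‖c‖ = 1) : ∃ w ≠ 0, ratMap w = c := by
  obtain ⟨s, hs⟩ := IsAlgClosed.exists_pow_nat_eq (⟨c 0, c 1⟩ : ℂ) two_pos
  have hre : s.re ^ 2 - s.im ^ 2 = c 0 := by simpa [sq] using congrArg Complex.re hs
  have him : 2 * s.re * s.im = c 1 := by
    have := congrArg Complex.im hs
    simp only [sq, Complex.mul_im] at this
    linarith
  have hc2 : c 0 ^ 2 + c 1 ^ 2 = 1 := by rw [← real_norm_sq_fin_two, hc, one_pow]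
  have hs1 : s.re ^ 2 + s.im ^ 2 = 1 := by
    have : (s.re ^ 2 + s.im ^ 2) ^ 2 = 1 := by rw [← hc2, ← hre, ← him]; ring
    nlinarith [sq_nonneg s.re, sq_nonneg s.im]
  set w : EuclideanSpace ℝ (Fin 2) := !₂[s.re, s.im]
  have hw : w ≠ 0 := by
    intro h
    have h0 : s.re = 0 := congrArg (· 0) h
    have h1 : s.im = 0 := congrArg (· 1) h
    simp [h0, h1] at hs1
  refine ⟨w, hw, ?_⟩
  ext i
  fin_cases i
  · simp [ratMap_apply_zero_of_ne_zero hw, w, hs1, hre]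
  · simp [ratMap_apply_one_of_ne_zero hw, w, hs1, him]

lemma norm_le_limsup_ratMap_quotient (x : EuclideanSpace ℝ (Fin 2))
    {y : EuclideanSpace ℝ (Fin 2)} (hy : y ≠ 0) :
    ‖y‖ ≤ limsup (fun u => (⟪x, u⟫ - ⟪y, ratMap u⟫) / (‖u‖ + ‖ratMap u‖)) (𝓝[≠] 0) := by
  have hy' : ‖y‖ ≠ 0 := norm_ne_zero_iff.2 hy
  set c := -(‖y‖⁻¹ • y)
  have hc : ‖c‖ = 1 := by simp [c, norm_smul, hy']
  have hyc : ⟪y, c⟫ = -‖y‖ := by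
    rw [inner_neg_right, real_inner_smul_right, real_inner_self_eq_norm_sq]
    field_simp
  obtain ⟨w, hw, hwc⟩ := exists_ratMap_eq hc
  have hray : ∀ t : ℝ, t ≠ 0 →
      (⟪x, t • w⟫ - ⟪y, ratMap (t • w)⟫) / (‖t • w‖ + ‖ratMap (t • w)‖)
        = (t * ⟪x, w⟫ + ‖y‖) / (|t| * ‖w‖ + 1) := by
    intro t ht
    rw [ratMap_smul ht, hwc, hyc, hc, real_inner_smul_right, norm_smul, Real.norm_eq_abs,
      sub_neg_eq_add]
  refine le_limsup_of_tendsto_comp (γ := fun t : ℝ => t • w) (l := 𝓝[≠] 0) ?_ ?_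
    (isBoundedUnder_of ⟨‖x‖ + ‖y‖, fun u => inner_sub_inner_div_norm_add_norm_le _ _ _ _⟩)
  · refine tendsto_nhdsWithin_of_tendsto_nhds_of_eventually_within _ ?_ ?_
    · have : Continuous fun t : ℝ => t • w := by fun_prop
      simpa using (this.tendsto 0).mono_left nhdsWithin_le_nhds
    · filter_upwards [self_mem_nhdsWithin] with t ht using smul_ne_zero ht hw
  · have hlim : Tendsto (fun t : ℝ => (t * ⟪x, w⟫ + ‖y‖) / (|t| * ‖w‖ + 1)) (𝓝 0) (𝓝 ‖y‖) := by
      have : Continuous fun t : ℝ => (t * ⟪x, w⟫ + ‖y‖) / (|t| * ‖w‖ + 1) := by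
        fun_prop (disch := intro t; positivity)
      simpa using this.tendsto 0
    refine (hlim.mono_left nhdsWithin_le_nhds).congr' ?_
    filter_upwards [self_mem_nhdsWithin] with t ht using (hray t ht).symm

/-- for every `y ≠ 0` and every `x`, the limsup quotient defining the
Mordukhovich coderivative of `ratMap` at the origin is positive; consequently the
coderivative set of `ratMap` at the origin applied to `y` is empty for every `y ≠ 0`. -/
theorem ratMap_coderivative_empty_at_origin (y : EuclideanSpace ℝ (Fin 2)) (hy : y ≠ 0) :
    (∀ x : EuclideanSpace ℝ (Fin 2),
      0 < Filter.limsup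
        (fun u => (⟪x, u⟫ - ⟪y, ratMap u⟫) / (‖u‖ + ‖ratMap u‖))
        (nhdsWithin 0 {(0 : EuclideanSpace ℝ (Fin 2))}ᶜ)) ∧
    { x : EuclideanSpace ℝ (Fin 2) |
      Filter.limsup
        (fun u => (⟪x, u⟫ - ⟪y, ratMap u⟫) / (‖u‖ + ‖ratMap u‖))
        (nhdsWithin 0 {(0 : EuclideanSpace ℝ (Fin 2))}ᶜ) ≤ 0 } = ∅ := by
  have hpos : ∀ x : EuclideanSpace ℝ (Fin 2), 0 < limsup
      (fun u => (⟪x, u⟫ - ⟪y, ratMap u⟫) / (‖u‖ + ‖ratMap u‖)) (𝓝[≠] 0) :=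
    fun x => (norm_pos_iff.2 hy).trans_le (norm_le_limsup_ratMap_quotient x hy)
  exact ⟨hpos, Set.eq_empty_of_forall_notMem fun x hx => (hpos x).not_ge hx⟩
end
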